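/- Let G be a global type and let G' be a global type admitting a commutation-closed complement Ḡ'. Then L∃(G) ⊆ L∃(G') if and only if the word language L(G ⊗ Ḡ') of the product automaton is empty. (Consequently, by the independence of subtyping from the communication model, G is a subtype of G' in any communication model containing synch if and only if L(G ⊗ Ḡ') = ∅.) -/
import Mathlib


/-! ## Common definitions: actions, executions, MSCs, communication models,
communicating finite state machines, and global types. -/

/-- Actions: a send `p▷q!m` or a receive `p▷q?m`. -/
inductive Act (P M : Type) : Type where
  | snd (p q : P) (m : M)
  | rcv (p q : P) (m : M)
deriving DecidableEq

namespace Act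
variable {P M : Type}

/-- The process executing an action: a send belongs to the sender,
a receive belongs to the receiver. -/
def proc : Act P M → P
  | .snd p _ _ => p
  | .rcv _ q _ => q

end Act

/-- Raw executions: a word of actions together with a source function on positions. -/
structure Exec (P M : Type) : Type where
  w : List (Act P M)
  src : ℕ → ℕ

namespace Exec
variable {P M : Type}

def act? (e : Exec P M) (i : ℕ) : Option (Act P M) := e.w[i]?

def IsSend (e : Exec P M) (i : ℕ) : Prop := ∃ p q m, e.act? i = some (.snd p q m)

def IsRecv (e : Exec P M) (i : ℕ) : Prop := ∃ p q m, e.act? i = some (.rcv p q m)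

/-- Well-formedness of an execution: each receive event `r` labelled `p▷q?m` has a
source send event `src r < r` labelled `p▷q!m`, and `src` is injective on receive events. -/
def WF (e : Exec P M) : Prop :=
  (∀ i p q m, e.act? i = some (.rcv p q m) →
    e.src i < i ∧ e.act? (e.src i) = some (.snd p q m)) ∧
  (∀ i j, e.IsRecv i → e.IsRecv j → e.src i = e.src j → i = j)

/-- A send event is matched if it is the source of some receive event. -/
def Matched (e : Exec P M) (s : ℕ) : Prop := ∃ r, e.IsRecv r ∧ e.src r = s

def OrphanFree (e : Exec P M) : Prop := ∀ s, e.IsSend s → e.Matched s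

/-- Prefix of executions: the word is a prefix and the source functions agree
on the receive events of the shorter one. -/
def IsPrefix (e₁ e₂ : Exec P M) : Prop :=
  e₁.w <+: e₂.w ∧ ∀ i, e₁.IsRecv i → e₁.src i = e₂.src i

/-- Projection of an execution onto the actions of a process. -/
def proj (e : Exec P M) [DecidableEq P] (p : P) : List (Act P M) :=
  e.w.filter (fun a => decide (a.proc = p))

/-- The MSC event `(process, index within the process)` at a position of the word. -/
def evOf (e : Exec P M) [DecidableEq P] (i : ℕ) : Option (P × ℕ) :=
  (e.act? i).map
    (fun a => (a.proc, ((e.w.take i).filter (fun b => decide (b.proc = a.proc))).length))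

/-- The position in the word of the `i`-th event of process `p`. -/
def posOf (e : Exec P M) [DecidableEq P] (ev : P × ℕ) : ℕ :=
  ((List.range e.w.length).filter
    (fun k => decide ((e.act? k).map Act.proc = some ev.1))).getD ev.2 0

end Exec

/-- Raw MSCs: a word of actions per process, and a source function on events. -/
structure MSC (P M : Type) : Type where
  w : P → List (Act P M)
  src : P × ℕ → P × ℕ

namespace MSC
variable {P M : Type}

def act? (Mm : MSC P M) (ev : P × ℕ) : Option (Act P M) := (Mm.w ev.1)[ev.2]?

def IsSend (Mm : MSC P M) (ev : P × ℕ) : Prop := ∃ p q m, Mm.act? ev = some (.snd p q m)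

def IsRecv (Mm : MSC P M) (ev : P × ℕ) : Prop := ∃ p q m, Mm.act? ev = some (.rcv p q m)

/-- Well-formedness of an MSC. -/
def WF (Mm : MSC P M) : Prop :=
  (∀ p, ∀ a ∈ Mm.w p, a.proc = p) ∧
  (∀ ev p q m, Mm.act? ev = some (.rcv p q m) → Mm.act? (Mm.src ev) = some (.snd p q m)) ∧
  (∀ ev ev', Mm.IsRecv ev → Mm.IsRecv ev' → Mm.src ev = Mm.src ev' → ev = ev')

/-- Basic happens-before steps: process order and message order. -/
inductive hbBase (Mm : MSC P M) : P × ℕ → P × ℕ → Prop where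
  | proc (p : P) (i j : ℕ) : i < j → j < (Mm.w p).length → hbBase Mm (p, i) (p, j)
  | msg (ev : P × ℕ) : Mm.IsRecv ev → hbBase Mm (Mm.src ev) ev

/-- The happens-before relation: least transitive relation containing the basic steps. -/
def hb (Mm : MSC P M) : P × ℕ → P × ℕ → Prop := Relation.TransGen (hbBase Mm)

/-- Prefix of MSCs. -/
def IsPrefix (M₁ M₂ : MSC P M) : Prop :=
  (∀ p, M₁.w p <+: M₂.w p) ∧ ∀ ev, M₁.IsRecv ev → M₁.src ev = M₂.src ev

end MSC

/-- Prefix closure of a set of MSCs. -/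
def prefSet {P M : Type} (X : Set (MSC P M)) : Set (MSC P M) :=
  {Mm | ∃ M' ∈ X, Mm.IsPrefix M'}

/-- The MSC of an execution: project onto each process and lift the source function. -/
def Exec.toMSC {P M : Type} [DecidableEq P] (e : Exec P M) : MSC P M where
  w p := e.w.filter (fun a => decide (a.proc = p))
  src ev := (e.evOf (e.src (e.posOf ev))).getD ev

/-- The linearisations of an MSC, identified with the executions they induce. -/
def lin {P M : Type} [DecidableEq P] (Mm : MSC P M) : Set (Exec P M) :=
  {e | e.WF ∧ e.toMSC = Mm}

/-- The linearisations of an MSC lying in a communication model. -/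
def linC {P M : Type} [DecidableEq P] (Com : Set (Exec P M)) (Mm : MSC P M) :
    Set (Exec P M) :=
  lin Mm ∩ Com

/-- A communication model (a set of executions) is causally closed if whenever an MSC
has a linearisation in the model, all its linearisations are in the model. -/
def CausallyClosed {P M : Type} [DecidableEq P] (Com : Set (Exec P M)) : Prop :=
  ∀ Mm : MSC P M, (linC Com Mm).Nonempty → linC Com Mm = lin Mm

/-- The MSCs linearisable in a communication model. -/
def MSCModel {P M : Type} [DecidableEq P] (Com : Set (Exec P M)) : Set (MSC P M) :=
  {Mm | (linC Com Mm).Nonempty}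

/-- The bag communication model: all executions. -/
def bag {P M : Type} : Set (Exec P M) := {e | e.WF}

/-- The synchronous communication model: every send is immediately followed by
its matching receive. -/
def synch {P M : Type} : Set (Exec P M) :=
  {e | e.WF ∧ ∀ s, e.IsSend s → e.IsRecv (s + 1) ∧ e.src (s + 1) = s}

/-- The peer-to-peer communication model. -/
def p2p {P M : Type} : Set (Exec P M) :=
  {e | e.WF ∧ ∀ s₁ s₂ p q m₁ m₂,
    e.act? s₁ = some (.snd p q m₁) → e.act? s₂ = some (.snd p q m₂) → s₁ < s₂ →
    (¬ e.Matched s₂ ∨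
      ∃ r₁ r₂, r₁ < r₂ ∧ e.IsRecv r₁ ∧ e.IsRecv r₂ ∧ e.src r₁ = s₁ ∧ e.src r₂ = s₂)}

/-- Happens-before between positions of an execution, through its MSC. -/
def Exec.hbM {P M : Type} [DecidableEq P] (e : Exec P M) (i j : ℕ) : Prop :=
  ∃ ev₁ ev₂, e.evOf i = some ev₁ ∧ e.evOf j = some ev₂ ∧ e.toMSC.hb ev₁ ev₂

/-- The causally ordered communication model. -/
def causal {P M : Type} [DecidableEq P] : Set (Exec P M) :=
  {e | e.WF ∧ ∀ s₁ s₂ p₁ p₂ q m₁ m₂,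
    e.act? s₁ = some (.snd p₁ q m₁) → e.act? s₂ = some (.snd p₂ q m₂) → e.hbM s₁ s₂ →
    (¬ e.Matched s₂ ∨
      ∃ r₁ r₂, e.hbM r₁ r₂ ∧ e.IsRecv r₁ ∧ e.IsRecv r₂ ∧ e.src r₁ = s₁ ∧ e.src r₂ = s₂)}

/-- A communicating finite state machine: an NFA with ε-transitions
(over the actions of a process) with finitely many states. -/
structure CFSM (A : Type) : Type 1 where
  State : Type
  fin : Fintype State
  aut : εNFA A State

instance {A : Type} (c : CFSM A) : Fintype c.State := c.fin

/-- The machine obtained by making all states accepting. -/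
def CFSM.up {A : Type} (c : CFSM A) : CFSM A :=
  ⟨c.State, c.fin, { c.aut with accept := Set.univ }⟩

/-- Making all states of all machines of a system accepting. -/
def sysUp {P M : Type} (S : P → CFSM (Act P M)) : P → CFSM (Act P M) :=
  fun p => (S p).up

/-- `Exec(S, Com)`: the executions of a system of CFSMs in a communication model. -/
def ExecSys {P M : Type} [DecidableEq P] (S : P → CFSM (Act P M)) (Com : Set (Exec P M)) :
    Set (Exec P M) :=
  {e | e ∈ Com ∧ ∀ p, e.proj p ∈ (S p).aut.accepts}

/-- `MSC(S, Com)`: the MSCs of the executions of a system of CFSMs. -/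
def MSCSys {P M : Type} [DecidableEq P] (S : P → CFSM (Act P M)) (Com : Set (Exec P M)) :
    Set (MSC P M) :=
  Exec.toMSC '' ExecSys S Com

/-- A system is deadlock-free for `Com` if every execution of the system with all states
accepting is a prefix of an accepting execution of the system. -/
def DeadlockFree {P M : Type} [DecidableEq P] (S : P → CFSM (Act P M))
    (Com : Set (Exec P M)) : Prop :=
  ∀ e ∈ ExecSys (sysUp S) Com, ∃ e' ∈ ExecSys S Com, e.IsPrefix e'

/-- A system is orphan-free for `Com` if all its executions are orphan-free. -/
def SysOrphanFree {P M : Type} [DecidableEq P] (S : P → CFSM (Act P M))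
    (Com : Set (Exec P M)) : Prop :=
  ∀ e ∈ ExecSys S Com, e.OrphanFree

/-- An arrow `p→q:m` with `p ≠ q`. -/
def Arrow (P M : Type) : Type := {x : P × P × M // x.1 ≠ x.2.1}

namespace Arrow
variable {P M : Type}

def sender (a : Arrow P M) : P := a.1.1
def receiver (a : Arrow P M) : P := a.1.2.1
def msg (a : Arrow P M) : M := a.1.2.2
def sendAct (a : Arrow P M) : Act P M := .snd a.sender a.receiver a.msg
def recvAct (a : Arrow P M) : Act P M := .rcv a.sender a.receiver a.msg

/-- Two arrows commute when their pairs of processes are disjoint. -/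
def Commutes (a b : Arrow P M) : Prop :=
  a.sender ≠ b.sender ∧ a.sender ≠ b.receiver ∧
    a.receiver ≠ b.sender ∧ a.receiver ≠ b.receiver

instance [DecidableEq P] [Fintype P] [Fintype M] : Fintype (Arrow P M) :=
  Subtype.fintype _

end Arrow

/-- A global type: a deterministic finite (possibly partial) automaton over arrows. -/
structure GType (P M : Type) : Type 1 where
  State : Type
  fin : Fintype State
  step : State → Arrow P M → Option State
  start : State
  accept : Set State

instance {P M : Type} (G : GType P M) : Fintype G.State := G.fin

namespace GType
variable {P M : Type}

def evalFrom (G : GType P M) (s : Option G.State) (w : List (Arrow P M)) : Option G.State :=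
  w.foldl (fun s a => s.bind (fun q => G.step q a)) s

/-- The word language of a global type. -/
def lang (G : GType P M) : Set (List (Arrow P M)) :=
  {w | ∃ s, G.evalFrom (some G.start) w = some s ∧ s ∈ G.accept}

/-- The arrows labelling the outgoing transitions of a state. -/
def choices (G : GType P M) (s : G.State) : Set (Arrow P M) := {a | (G.step s a).isSome}

/-- Commutation-determinism: no two arrows available at a same state commute. -/
def CommDet (G : GType P M) : Prop :=
  ∀ s : G.State, ∀ a ∈ G.choices s, ∀ b ∈ G.choices s, ¬ a.Commutes b

/-- Sender-driven choice: all arrows available at a same state have the same sender. -/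
def SenderDriven (G : GType P M) : Prop :=
  ∀ s : G.State, ∀ a ∈ G.choices s, ∀ b ∈ G.choices s, a.sender = b.sender

end GType

/-- The synchronous execution coded by a sequence of arrows. -/
def execOfArrows {P M : Type} (w : List (Arrow P M)) : Exec P M where
  w := (w.map (fun a => [a.sendAct, a.recvAct])).flatten
  src := fun i => i - 1

/-- The MSC coded by a sequence of arrows. -/
def mscOfArrows {P M : Type} [DecidableEq P] (w : List (Arrow P M)) : MSC P M :=
  (execOfArrows w).toMSC

/-- The set of MSCs of sequences of arrows (MSCs linearisable in the synchronous model). -/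
def MSCsynch (P M : Type) [DecidableEq P] : Set (MSC P M) :=
  Set.range (mscOfArrows (P := P) (M := M))

/-- The existential MSC language of a global type. -/
def Lexists {P M : Type} [DecidableEq P] (G : GType P M) : Set (MSC P M) :=
  mscOfArrows '' G.lang

/-- The universal MSC language of a global type. -/
def Lforall {P M : Type} [DecidableEq P] (G : GType P M) : Set (MSC P M) :=
  {Mm | (∃ w, mscOfArrows w = Mm) ∧ ∀ w, mscOfArrows w = Mm → w ∈ G.lang}

/-- A global type is commutation-closed when its existential and universal MSC
languages coincide. -/
def GType.CommClosed {P M : Type} [DecidableEq P] (G : GType P M) : Prop :=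
  Lexists G = Lforall G

/-- The relabelling of an arrow for the projection onto process `p`. -/
def projLabel {P M : Type} [DecidableEq P] (p : P) (a : Arrow P M) : Option (Act P M) :=
  if a.sender = p then some a.sendAct
  else if a.receiver = p then some a.recvAct
  else none

/-- The projected system of CFSMs of a global type. -/
def projG {P M : Type} [DecidableEq P] (G : GType P M) : P → CFSM (Act P M) :=
  fun p =>
    ⟨G.State, G.fin,
      { step := fun s oa =>
          {s' | ∃ arr : Arrow P M, G.step s arr = some s' ∧ projLabel p arr = oa},
        start := {G.start},
        accept := G.accept }⟩

/-- `Exec(G, Com)`: the semantics of a global type in a communication model. -/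
def ExecG {P M : Type} [DecidableEq P] (G : GType P M) (Com : Set (Exec P M)) :
    Set (Exec P M) :=
  {e | ∃ Mm ∈ Lexists G, e ∈ linC Com Mm}

/-- Deadlock-free realisability of a global type in a communication model:
(CC) conformance and (DF) deadlock freedom of the projected system. -/
def DFRealisable {P M : Type} [DecidableEq P] (G : GType P M) (Com : Set (Exec P M)) : Prop :=
  ExecSys (projG G) Com = ExecG G Com ∧ DeadlockFree (projG G) Com

/-- The synchronous product of a system of CFSMs: an ε-NFA over arrows. -/
def syncProd {P M : Type} (S : P → CFSM (Act P M)) :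
    εNFA (Arrow P M) (∀ p, (S p).State) where
  step st oa :=
    match oa with
    | some a =>
        {st' | st' a.sender ∈ (S a.sender).aut.step (st a.sender) (some a.sendAct) ∧
               st' a.receiver ∈ (S a.receiver).aut.step (st a.receiver) (some a.recvAct) ∧
               ∀ r, r ≠ a.sender → r ≠ a.receiver → st' r = st r}
    | none =>
        {st' | ∃ p, st' p ∈ (S p).aut.step (st p) none ∧ ∀ r, r ≠ p → st' r = st r}
  start := {st | ∀ p, st p ∈ (S p).aut.start}
  accept := {st | ∀ p, st p ∈ (S p).aut.accept}

/-- `prod(S)`: the powerset determinisation of the synchronous product, a global type. -/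
noncomputable def prodG {P M : Type} [Fintype P] (S : P → CFSM (Act P M)) : GType P M :=
  let A := (syncProd S).toNFA.toDFA
  { State := Set (∀ p, (S p).State)
    fin := by
      haveI : Finite (∀ p, (S p).State) := inferInstance
      exact Fintype.ofFinite _
    step := fun s a => some (A.step s a)
    start := A.start
    accept := A.accept }

/-- The product `G₁ ⊗ G₂` of two global types (language intersection). -/
def prodGT {P M : Type} (G₁ G₂ : GType P M) : GType P M where
  State := G₁.State × G₂.State
  fin := inferInstance
  step s a := (G₁.step s.1 a).bind fun q₁ => (G₂.step s.2 a).map fun q₂ => (q₁, q₂)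
  start := (G₁.start, G₂.start)
  accept := {s | s.1 ∈ G₁.accept ∧ s.2 ∈ G₂.accept}

/-- The dual of a global type: complete it and swap accepting and non-accepting states. -/
def dualG {P M : Type} (G : GType P M) : GType P M where
  State := Option G.State
  fin := inferInstance
  step s a := some (s.bind fun q => G.step q a)
  start := some G.start
  accept := {s | ∀ q, s = some q → q ∉ G.accept}

/-- RSC executions: every receive immediately follows its source send. -/
def RSCexec {P M : Type} : Set (Exec P M) :=
  {e | e.WF ∧ ∀ r, e.IsRecv r → e.src r = r - 1}

/-- The MSCs admitting an RSC linearisation. -/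
def MSCrsc {P M : Type} [DecidableEq P] : Set (MSC P M) :=
  {Mm | ∃ e ∈ RSCexec (P := P) (M := M), e.toMSC = Mm}

/-- A set of MSCs is RegSC if some NFA over actions accepts exactly the RSC executions
whose MSC belongs to the set. -/
def RegSCset {P M : Type} [DecidableEq P] (X : Set (MSC P M)) : Prop :=
  ∃ (σ : Type) (_ : Fintype σ) (A : NFA (Act P M) σ),
    ∀ w : List (Act P M),
      w ∈ A.accepts ↔ ∃ e ∈ RSCexec (P := P) (M := M), e.w = w ∧ e.toMSC ∈ X

/-- A communication model is RegSC if the set of its RSC-linearisable MSCs is RegSC. -/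
def RegSCmodel {P M : Type} [DecidableEq P] (Com : Set (Exec P M)) : Prop :=
  RegSCset (MSCModel Com ∩ MSCrsc)

def optPair {α β : Type*} (o₁ : Option α) (o₂ : Option β) : Option (α × β) :=
  o₁.bind fun q₁ => o₂.map fun q₂ => (q₁, q₂)

lemma prodGT_evalFrom {P M : Type} (G₁ G₂ : GType P M)
    (w : List (Arrow P M)) : ∀ (o₁ : Option G₁.State) (o₂ : Option G₂.State),
    (prodGT G₁ G₂).evalFrom (optPair o₁ o₂) w =
      optPair (G₁.evalFrom o₁ w) (G₂.evalFrom o₂ w) := by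
  induction w with
  | nil => intro o₁ o₂; rfl
  | cons a w ih =>
    intro o₁ o₂
    have h : ((optPair o₁ o₂).bind (fun q => (prodGT G₁ G₂).step q a))
        = optPair (o₁.bind fun q => G₁.step q a) (o₂.bind fun q => G₂.step q a) := by
      cases o₁ <;> cases o₂ <;> simp [optPair, prodGT]
    show (prodGT G₁ G₂).evalFrom ((optPair o₁ o₂).bind fun q => (prodGT G₁ G₂).step q a) w
        = optPair (G₁.evalFrom (o₁.bind fun q => G₁.step q a) w)
            (G₂.evalFrom (o₂.bind fun q => G₂.step q a) w)
    rw [h]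
    exact ih _ _

lemma prodGT_lang_iff {P M : Type} (G₁ G₂ : GType P M) (w : List (Arrow P M)) :
    w ∈ (prodGT G₁ G₂).lang ↔ w ∈ G₁.lang ∧ w ∈ G₂.lang := by
  have key := prodGT_evalFrom G₁ G₂ w (some G₁.start) (some G₂.start)
  have hst : optPair (some G₁.start) (some G₂.start)
      = some ((prodGT G₁ G₂).start) := rfl
  rw [hst] at key
  constructor
  · rintro ⟨s, hs, hacc⟩
    rw [key] at hs
    rcases h1 : G₁.evalFrom (some G₁.start) w with _ | q₁ <;>
      rcases h2 : G₂.evalFrom (some G₂.start) w with _ | q₂ <;>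
        rw [h1, h2] at hs <;> simp [optPair] at hs
    cases hs
    exact ⟨⟨q₁, h1, hacc.1⟩, ⟨q₂, h2, hacc.2⟩⟩
  · rintro ⟨⟨s₁, h1, ha1⟩, ⟨s₂, h2, ha2⟩⟩
    refine ⟨(s₁, s₂), ?_, ⟨ha1, ha2⟩⟩
    rw [key, h1, h2]; rfl

/-- if `Ḡ'` is a commutation-closed complement of `G'`, then
`L∃(G) ⊆ L∃(G')` iff the word language of `G ⊗ Ḡ'` is empty. -/
theorem stmt13 (P Mg : Type) [Fintype P] [DecidableEq P] [Fintype Mg] [DecidableEq Mg]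
    (G G' Gc' : GType P Mg) (hcc : Gc'.CommClosed)
    (hcomp : Lexists G' = MSCsynch P Mg \ Lexists Gc') :
    Lexists G ⊆ Lexists G' ↔ (prodGT G Gc').lang = ∅ := by
  constructor
  · intro hsub
    ext w
    simp only [Set.mem_empty_iff_false, iff_false]
    intro hw
    rw [prodGT_lang_iff] at hw
    have hM : mscOfArrows w ∈ Lexists G := ⟨w, hw.1, rfl⟩
    have hM' := hsub hM
    rw [hcomp] at hM'
    exact hM'.2 ⟨w, hw.2, rfl⟩
  · intro hempty
    rintro Mm ⟨w, hwG, rfl⟩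
    rw [hcomp]
    refine ⟨⟨w, rfl⟩, ?_⟩
    intro hmem
    rw [hcc] at hmem
    have hwGc : w ∈ Gc'.lang := hmem.2 w rfl
    have : w ∈ (prodGT G Gc').lang := (prodGT_lang_iff G Gc' w).2 ⟨hwG, hwGc⟩
    rw [hempty] at this
    exact this
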